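/- Let d ≥ 1, let b_1, …, b_d be real numbers, and let T : 𝕋^d → 𝕋^d be the affine skew product T(x_1, x_2, …, x_d) = (x_1 + b_d, x_2 + x_1 + b_{d−1}, …, x_d + x_{d−1} + b_1) (mod 1 in each coordinate). If (c_n) is an oscillating sequence of order d, then for every continuous function F : 𝕋^d → ℂ and every x ∈ 𝕋^d, (1/N) ∑_{n=1}^{N} c_n F(T^n x) → 0 as N → ∞. -/

import Mathlib

open Filter Finset

/-- `c` is an oscillating sequence of order `k`. -/
def OscillatingOfOrder (c : ℕ → ℂ) (k : ℕ) : Prop :=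
  (∃ l : ℝ, 1 ≤ l ∧
      (fun N : ℕ => ∑ n ∈ Finset.Icc 1 N, ‖c n‖ ^ l)
        =O[atTop] (fun N : ℕ => (N : ℝ))) ∧
  ∀ P : Polynomial ℝ, P.natDegree ≤ k →
    Tendsto (fun N : ℕ => (N : ℂ)⁻¹ *
        ∑ n ∈ Finset.Icc 1 N, c n * Complex.exp (2 * Real.pi * Complex.I * (P.eval (n : ℝ))))
      atTop (nhds 0)

/-- The `d`-dimensional torus `𝕋^d = (ℝ/ℤ)^d`. -/
abbrev Torus (d : ℕ) := Fin d → AddCircle (1 : ℝ)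

/-- The affine skew product on `𝕋^d`:
`T(x_1,…,x_d) = (x_1 + b_d, x_2 + x_1 + b_{d-1}, …, x_d + x_{d-1} + b_1)`.
Here `b i` (for `i : Fin d`, `0`-indexed) represents `b_{i+1}`, so coordinate `i`
(representing `x_{i+1}`) receives `b (Fin.rev i) = b_{d-i}` (in the `1`-indexed notation). -/
noncomputable def skewProduct (d : ℕ) (b : Fin d → ℝ) (x : Torus d) : Torus d := fun i =>
  (if h : (i : ℕ) = 0 then x i
    else x i + x ⟨(i : ℕ) - 1, Nat.lt_of_le_of_lt (Nat.sub_le _ _) i.isLt⟩)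
    + ((b (Fin.rev i) : ℝ) : AddCircle (1 : ℝ))

/-!
Each coordinate of the orbit `n ↦ Tⁿ x` is a polynomial sequence on the circle: the forward
difference of the `i`-th coordinate is the `(i-1)`-st coordinate plus a constant, so its
`(i+2)`-nd difference vanishes, and Newton's forward-difference formula then lifts it to a real
polynomial of degree at most `d`. Consequently, along the orbit a character `z ↦ e(m · z)` of
`𝕋^d` becomes `n ↦ e(Q n)` with `deg Q ≤ d`, whose `c`-weighted averages tend to `0` by
oscillation. The moment bound on `c` keeps the averages of `|c n|` bounded, so the functions `F`
whose weighted averages tend to `0` form a closed subspace of `C(𝕋^d, ℂ)`; it contains the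
trigonometric polynomials, which are dense by Stone–Weierstrass.
-/

open Polynomial Topology fwdDiff UnitAddTorus

section ForwardDifference

variable {G : Type*} [AddCommGroup G]

theorem fwdDiff_iter_eq_zero_of_le {u : ℕ → G} {k l : ℕ} (hu : Δ_[1] ^[k] u = 0) (hkl : k ≤ l) :
    Δ_[1] ^[l] u = 0 := by
  obtain ⟨j, rfl⟩ := Nat.exists_eq_add_of_le hkl
  rw [add_comm, Function.iterate_add_apply, hu]
  exact Function.iterate_fixed (fwdDiff_const 1 0) j

theorem fwdDiff_iter_const_eq_zero (g : G) {k : ℕ} (hk : 1 ≤ k) :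
    Δ_[1] ^[k] (fun _ : ℕ => g) = 0 :=
  fwdDiff_iter_eq_zero_of_le (k := 1) (fwdDiff_const 1 g) hk

theorem eq_sum_choose_smul_fwdDiff_iter_of_fwdDiff_iter_eq_zero {u : ℕ → G} {m : ℕ}
    (hu : Δ_[1] ^[m + 1] u = 0) (n : ℕ) :
    u n = ∑ k ∈ range (m + 1), n.choose k • Δ_[1] ^[k] u 0 := by
  have hsub : ∀ a ≤ n + m, range (a + 1) ⊆ range (n + m + 1) := fun a ha k hk => by
    simp only [mem_range] at hk ⊢; omega
  calc u n = u (0 + n • 1) := by simp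
    _ = ∑ k ∈ range (n + 1), n.choose k • Δ_[1] ^[k] u 0 := shift_eq_sum_fwdDiff_iter 1 u n 0
    _ = ∑ k ∈ range (n + m + 1), n.choose k • Δ_[1] ^[k] u 0 :=
      sum_subset (hsub n (by omega)) fun k _ hk => by
        rw [Nat.choose_eq_zero_of_lt (by simpa using hk), zero_smul]
    _ = ∑ k ∈ range (m + 1), n.choose k • Δ_[1] ^[k] u 0 :=
      (sum_subset (hsub m (by omega)) fun k _ hk => by
        rw [fwdDiff_iter_eq_zero_of_le hu (by simpa using hk), Pi.zero_apply, smul_zero]).symm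

end ForwardDifference

theorem exists_natDegree_le_eval_natCast_eq_choose {R : Type*} [Field R] [CharZero R] (k : ℕ) :
    ∃ Q : R[X], Q.natDegree ≤ k ∧ ∀ n : ℕ, Q.eval (n : R) = n.choose k := by
  refine ⟨C (k.factorial : R)⁻¹ * descPochhammer R k, ?_, fun n => ?_⟩
  · exact (natDegree_C_mul_le _ _).trans (descPochhammer_natDegree R k).le
  · rw [eval_mul, eval_C, descPochhammer_eval_eq_descFactorial,
      Nat.descFactorial_eq_factorial_mul_choose, Nat.cast_mul,
      inv_mul_cancel_left₀ (Nat.cast_ne_zero.mpr k.factorial_ne_zero)]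

theorem AddCircle.exists_polynomial_of_fwdDiff_iter_eq_zero {p : ℝ} {u : ℕ → AddCircle p}
    {m : ℕ} (hu : Δ_[1] ^[m + 1] u = 0) :
    ∃ P : ℝ[X], P.natDegree ≤ m ∧ ∀ n : ℕ, u n = ((P.eval (n : ℝ) : ℝ) : AddCircle p) := by
  choose r hr using fun k => QuotientAddGroup.mk_surjective (Δ_[1] ^[k] u 0)
  choose Q hQdeg hQ using exists_natDegree_le_eval_natCast_eq_choose (R := ℝ)
  refine ⟨∑ k ∈ range (m + 1), C (r k) * Q k,
    natDegree_sum_le_of_forall_le _ _ fun k hk =>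
      (natDegree_C_mul_le _ _).trans ((hQdeg k).trans (Nat.lt_succ_iff.mp (mem_range.mp hk))),
    fun n => ?_⟩
  rw [eq_sum_choose_smul_fwdDiff_iter_of_fwdDiff_iter_eq_zero hu n, eval_finsetSum]
  simp only [← hr, eval_mul, eval_C, hQ]
  change _ = QuotientAddGroup.mk' _ _
  rw [map_sum]
  refine sum_congr rfl fun k _ => ?_
  rw [QuotientAddGroup.mk'_apply, mul_comm, ← nsmul_eq_mul, AddCircle.coe_nsmul]

theorem fwdDiff_iter_skewProduct_iterate_apply_eq_zero (d : ℕ) (b : Fin d → ℝ) (x : Torus d)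
    (j : ℕ) (hj : j < d) :
    Δ_[1] ^[j + 2] (fun n => ((skewProduct d b)^[n] x) ⟨j, hj⟩) = 0 := by
  induction j with
  | zero =>
    have hΔ : Δ_[1] (fun n => ((skewProduct d b)^[n] x) ⟨0, hj⟩) =
        fun _ => ((b (Fin.rev ⟨0, hj⟩) : ℝ) : AddCircle (1 : ℝ)) := by
      ext n
      simp [fwdDiff, Function.iterate_succ_apply', skewProduct]
    rw [Function.iterate_succ_apply, hΔ]
    exact fwdDiff_iter_const_eq_zero _ (by omega)
  | succ j ih =>
    have hΔ : Δ_[1] (fun n => ((skewProduct d b)^[n] x) ⟨j + 1, hj⟩) =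
        (fun n => ((skewProduct d b)^[n] x) ⟨j, by omega⟩) +
          fun _ => ((b (Fin.rev ⟨j + 1, hj⟩) : ℝ) : AddCircle (1 : ℝ)) := by
      ext n
      simp only [fwdDiff, Function.iterate_succ_apply', skewProduct, Nat.add_eq_zero_iff,
        one_ne_zero, and_false, ↓reduceDIte, add_tsub_cancel_right, Pi.add_apply]
      abel
    rw [Function.iterate_succ_apply, hΔ, fwdDiff_iter_add, ih,
      fwdDiff_iter_const_eq_zero _ (by omega), add_zero]

theorem exists_polynomial_skewProduct_iterate_apply (d : ℕ) (b : Fin d → ℝ) (x : Torus d)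
    (i : Fin d) :
    ∃ P : ℝ[X], P.natDegree ≤ d ∧
      ∀ n : ℕ, ((skewProduct d b)^[n] x) i = ((P.eval (n : ℝ) : ℝ) : AddCircle (1 : ℝ)) :=
  AddCircle.exists_polynomial_of_fwdDiff_iter_eq_zero <|
    fwdDiff_iter_eq_zero_of_le (fwdDiff_iter_skewProduct_iterate_apply_eq_zero d b x i i.isLt)
      (by omega)

theorem mFourier_apply_coe {ι : Type*} [Fintype ι] (m : ι → ℤ) (y : ι → ℝ) :
    mFourier m (fun i => (y i : UnitAddCircle)) =
      Complex.exp (2 * Real.pi * Complex.I * ((∑ i, m i * y i : ℝ) : ℂ)) := by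
  simp only [mFourier, ContinuousMap.coe_mk, fourier_coe_apply, ← Complex.exp_sum]
  push_cast
  rw [mul_sum]
  simp only [div_one, mul_assoc]

noncomputable def weightedAverage (c u : ℕ → ℂ) (N : ℕ) : ℂ :=
  (N : ℂ)⁻¹ * ∑ n ∈ Icc 1 N, c n * u n

section WeightedAverage

variable (c : ℕ → ℂ)

theorem weightedAverage_add (u v : ℕ → ℂ) (N : ℕ) :
    weightedAverage c (u + v) N = weightedAverage c u N + weightedAverage c v N := by
  simp only [weightedAverage, Pi.add_apply, mul_add, sum_add_distrib]

theorem weightedAverage_smul (a : ℂ) (u : ℕ → ℂ) (N : ℕ) :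
    weightedAverage c (a • u) N = a * weightedAverage c u N := by
  simp only [weightedAverage, Pi.smul_apply, smul_eq_mul, mul_sum, mul_left_comm]

theorem norm_weightedAverage_le {u : ℕ → ℂ} {M : ℝ} (hu : ∀ n, ‖u n‖ ≤ M) (N : ℕ) :
    ‖weightedAverage c u N‖ ≤ ((N : ℝ)⁻¹ * ∑ n ∈ Icc 1 N, ‖c n‖) * M := by
  rw [weightedAverage, norm_mul, norm_inv, Complex.norm_natCast, mul_assoc, sum_mul]
  gcongr
  refine (norm_sum_le _ _).trans (sum_le_sum fun n _ => ?_)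
  rw [norm_mul]
  exact mul_le_mul_of_nonneg_left (hu n) (norm_nonneg _)

variable {X : Type*} [TopologicalSpace X]

def weightedAverageNullSubmodule (z : ℕ → X) : Submodule ℂ C(X, ℂ) where
  carrier := {f | Tendsto (weightedAverage c fun n => f (z n)) atTop (𝓝 0)}
  zero_mem' := tendsto_const_nhds.congr fun N => by
    simp only [weightedAverage, ContinuousMap.zero_apply, mul_zero, sum_const_zero]
  add_mem' {f g} hf hg := by
    have h := (hf.add hg).congr fun N =>
      (weightedAverage_add c (fun n => f (z n)) (fun n => g (z n)) N).symm
    rwa [add_zero] at h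
  smul_mem' a f hf := by
    have h := (hf.const_mul a).congr fun N => (weightedAverage_smul c a (fun n => f (z n)) N).symm
    rwa [mul_zero] at h

theorem isClosed_weightedAverageNullSubmodule [CompactSpace X]
    (hc : (fun N : ℕ => ∑ n ∈ Icc 1 N, ‖c n‖) =O[atTop] (fun N : ℕ => (N : ℝ))) (z : ℕ → X) :
    IsClosed (weightedAverageNullSubmodule c z : Set C(X, ℂ)) := by
  obtain ⟨C, hC, hbound⟩ := hc.exists_pos
  refine isClosed_of_closure_subset fun f hf => NormedAddGroup.tendsto_nhds_zero.mpr ?_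
  intro ε hε
  obtain ⟨g, hg, hfg⟩ := Metric.mem_closure_iff.mp hf (ε / (2 * C)) (by positivity)
  filter_upwards [NormedAddGroup.tendsto_nhds_zero.mp hg (ε / 2) (by positivity), hbound.bound,
    eventually_gt_atTop 0] with N hgN hN hN0
  have hmean : (N : ℝ)⁻¹ * ∑ n ∈ Icc 1 N, ‖c n‖ ≤ C := by
    rw [Real.norm_of_nonneg (sum_nonneg fun n _ => norm_nonneg _), Real.norm_natCast] at hN
    rw [inv_mul_le_iff₀ (by exact_mod_cast hN0)]
    linarith
  have hsplit : weightedAverage c (fun n => f (z n)) N =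
      weightedAverage c (fun n => g (z n)) N + weightedAverage c (fun n => (f - g) (z n)) N := by
    rw [← weightedAverage_add]
    simp only [ContinuousMap.sub_apply, Pi.add_def, add_sub_cancel]
  have hdiff : ‖weightedAverage c (fun n => (f - g) (z n)) N‖ ≤ C * (ε / (2 * C)) :=
    (norm_weightedAverage_le c (fun n => (f - g).norm_coe_le_norm (z n)) N).trans <|
      mul_le_mul hmean (dist_eq_norm f g ▸ hfg.le) (norm_nonneg _) hC.le
  calc ‖weightedAverage c (fun n => f (z n)) N‖
      ≤ ‖weightedAverage c (fun n => g (z n)) N‖ +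
          ‖weightedAverage c (fun n => (f - g) (z n)) N‖ := hsplit ▸ norm_add_le _ _
    _ < ε / 2 + C * (ε / (2 * C)) := add_lt_add_of_lt_of_le hgN hdiff
    _ = ε := by field_simp; ring

end WeightedAverage

theorem isBigO_sum_norm_of_isBigO_sum_rpow {c : ℕ → ℂ} {l : ℝ} (hl : 1 ≤ l)
    (hc : (fun N : ℕ => ∑ n ∈ Icc 1 N, ‖c n‖ ^ l) =O[atTop] (fun N : ℕ => (N : ℝ))) :
    (fun N : ℕ => ∑ n ∈ Icc 1 N, ‖c n‖) =O[atTop] (fun N : ℕ => (N : ℝ)) := by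
  have hpoint : ∀ t : ℝ, 0 ≤ t → t ≤ 1 + t ^ l := fun t ht => by
    rcases le_total t 1 with h | h
    · linarith [Real.rpow_nonneg ht l]
    · linarith [Real.self_le_rpow_of_one_le h hl]
  refine (Asymptotics.isBigO_of_le atTop fun N => ?_).trans
    ((Asymptotics.isBigO_refl _ _).add hc)
  have hsum : ∑ n ∈ Icc 1 N, ‖c n‖ ≤ N + ∑ n ∈ Icc 1 N, ‖c n‖ ^ l := by
    calc ∑ n ∈ Icc 1 N, ‖c n‖ ≤ ∑ n ∈ Icc 1 N, (1 + ‖c n‖ ^ l) :=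
          sum_le_sum fun n _ => hpoint _ (norm_nonneg _)
      _ = N + ∑ n ∈ Icc 1 N, ‖c n‖ ^ l := by simp [sum_add_distrib]
  rwa [Real.norm_of_nonneg (sum_nonneg fun n _ => norm_nonneg _),
    Real.norm_of_nonneg (by positivity)]

namespace OscillatingOfOrder

variable {c : ℕ → ℂ} {k : ℕ} {ι : Type*} [Fintype ι] {P : ι → ℝ[X]}

theorem tendsto_weightedAverage_mFourier (hc : OscillatingOfOrder c k)
    (hP : ∀ i, (P i).natDegree ≤ k) (m : ι → ℤ) :
    Tendsto (weightedAverage c fun n =>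
      mFourier m fun i => (((P i).eval (n : ℝ) : ℝ) : UnitAddCircle)) atTop (𝓝 0) := by
  have hdeg : (∑ i, C (m i : ℝ) * P i).natDegree ≤ k :=
    natDegree_sum_le_of_forall_le _ _ fun i _ => (natDegree_C_mul_le _ _).trans (hP i)
  refine (hc.2 _ hdeg).congr fun N => ?_
  simp only [weightedAverage, mFourier_apply_coe, eval_finsetSum, eval_mul, eval_C]

theorem tendsto_weightedAverage_of_polynomial (hc : OscillatingOfOrder c k)
    (hP : ∀ i, (P i).natDegree ≤ k) (F : C(UnitAddTorus ι, ℂ)) :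
    Tendsto (weightedAverage c fun n => F fun i => (((P i).eval (n : ℝ) : ℝ) : UnitAddCircle))
      atTop (𝓝 0) := by
  obtain ⟨l, hl, hcl⟩ := hc.1
  have hspan : Submodule.span ℂ (Set.range mFourier) ≤
      weightedAverageNullSubmodule c fun n i => (((P i).eval (n : ℝ) : ℝ) : UnitAddCircle) :=
    Submodule.span_le.mpr <| by
      rintro _ ⟨m, rfl⟩
      exact hc.tendsto_weightedAverage_mFourier hP m
  have hclosure := Submodule.topologicalClosure_minimal _ hspan <|
    isClosed_weightedAverageNullSubmodule c (isBigO_sum_norm_of_isBigO_sum_rpow hl hcl) _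
  rw [span_mFourier_closure_eq_top] at hclosure
  exact hclosure (Submodule.mem_top (x := F))

end OscillatingOfOrder

theorem oscillating_orthogonal_to_skew_product
    (d : ℕ) (b : Fin d → ℝ) (c : ℕ → ℂ) (hc : OscillatingOfOrder c d)
    (F : Torus d → ℂ) (hF : Continuous F) (x : Torus d) :
    Tendsto (fun N : ℕ => (N : ℂ)⁻¹ *
        ∑ n ∈ Finset.Icc 1 N, c n * F ((skewProduct d b)^[n] x))
      atTop (nhds 0) := by
  choose P hPdeg hP using exists_polynomial_skewProduct_iterate_apply d b x
  have horbit : ∀ n : ℕ,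
      (skewProduct d b)^[n] x = fun i => (((P i).eval (n : ℝ) : ℝ) : UnitAddCircle) :=
    fun n => funext fun i => hP i n
  simp only [horbit]
  exact hc.tendsto_weightedAverage_of_polynomial hPdeg ⟨F, hF⟩
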